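/- Let V be a finite-dimensional real inner product space and let φ be an alternating p-form on V of comass one. Then for every linear endomorphism A of V and every φ-plane ξ = (e₁,…,e_p) ∈ G(φ), one has λ_φ(A)(e₁,…,e_p) = tr_ξ A = Σ_{j=1}^p ⟨e_j, A e_j⟩. (Theorem 2.3) -/
import Mathlib


open scoped RealInnerProductSpace

noncomputable section

variable {V : Type*} [NormedAddCommGroup V] [InnerProductSpace ℝ V] [FiniteDimensional ℝ V]

/-- `λ_φ(A)`, the action of the endomorphism `A` on the alternating `p`-form `φ` as a
derivation: `λ_φ(A)(v₁,…,v_p) = Σ_k φ(v₁,…,A v_k,…,v_p)`. -/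
def lambdaForm {p : ℕ} (φ : V [⋀^Fin p]→ₗ[ℝ] ℝ) (A : V →ₗ[ℝ] V) (v : Fin p → V) : ℝ :=
  ∑ k, φ (Function.update v k (A (v k)))

lemma key_unit {p : ℕ} (φ : V [⋀^Fin p]→ₗ[ℝ] ℝ)
    (hcomass : ∀ e : Fin p → V, Orthonormal ℝ e → φ e ≤ 1)
    (e : Fin p → V) (he : Orthonormal ℝ e) (heφ : φ e = 1)
    (k : Fin p) (u : V) (hun : ‖u‖ = 1) (huo : ∀ j, ⟪e j, u⟫ = 0) :
    φ (Function.update e k u) = 0 := by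
  have hee : ∀ i j, ⟪e i, e j⟫ = if i = j then 1 else 0 := orthonormal_iff_ite.mp he
  have huu : ⟪u, u⟫ = 1 := by
    rw [real_inner_self_eq_norm_sq, hun]; norm_num
  have hou : ∀ j, ⟪u, e j⟫ = 0 := fun j => by rw [real_inner_comm]; exact huo j
  set c : ℝ := φ (Function.update e k u) with hc
  have hbound : ∀ t : ℝ, Real.cos t + Real.sin t * c ≤ 1 := by
    intro t
    have horth : Orthonormal ℝ
        (Function.update e k (Real.cos t • e k + Real.sin t • u)) := by
      rw [orthonormal_iff_ite]
      intro i j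
      rcases eq_or_ne i k with hik | hik <;> rcases eq_or_ne j k with hjk | hjk
      · subst hik; subst hjk
        simp only [Function.update_self, if_pos rfl]
        rw [real_inner_add_add_self]
        simp only [real_inner_smul_left, real_inner_smul_right, huu, huo, hou, hee]
        norm_num
        nlinarith [Real.sin_sq_add_cos_sq t]
      · subst hik
        rw [Function.update_self, Function.update_of_ne hjk, if_neg (fun h => hjk h.symm)]
        simp only [inner_add_left, real_inner_smul_left, hee, huo, hou]
        rw [if_neg (fun h => hjk h.symm)]
        ring
      · subst hjk
        rw [Function.update_of_ne hik, Function.update_self, if_neg hik]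
        simp only [inner_add_right, real_inner_smul_right, hee, huo, if_neg hik]
        ring
      · rw [Function.update_of_ne hik, Function.update_of_ne hjk, hee i j]
    have hval : φ (Function.update e k (Real.cos t • e k + Real.sin t • u))
        = Real.cos t + Real.sin t * c := by
      rw [φ.map_update_add, φ.map_update_smul, φ.map_update_smul,
        Function.update_eq_self, heφ]
      simp [hc, smul_eq_mul]
    have := hcomass _ horth
    rw [hval] at this
    exact this
  have h := hbound (Real.arctan c)
  rw [Real.cos_arctan, Real.sin_arctan] at h
  have hs : Real.sqrt (1 + c ^ 2) > 0 := Real.sqrt_pos.mpr (by nlinarith)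
  have hs2 : Real.sqrt (1 + c ^ 2) ^ 2 = 1 + c ^ 2 := Real.sq_sqrt (by nlinarith)
  have hmul : (1 / Real.sqrt (1 + c ^ 2) + c / Real.sqrt (1 + c ^ 2) * c)
      * Real.sqrt (1 + c ^ 2) ≤ 1 * Real.sqrt (1 + c ^ 2) :=
    mul_le_mul_of_nonneg_right h hs.le
  field_simp at hmul
  nlinarith [sq_nonneg c]

lemma key_vanish {p : ℕ} (φ : V [⋀^Fin p]→ₗ[ℝ] ℝ)
    (hcomass : ∀ e : Fin p → V, Orthonormal ℝ e → φ e ≤ 1)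
    (e : Fin p → V) (he : Orthonormal ℝ e) (heφ : φ e = 1)
    (k : Fin p) (w : V) (hw : ∀ j, ⟪e j, w⟫ = 0) :
    φ (Function.update e k w) = 0 := by
  rcases eq_or_ne w 0 with rfl | hw0
  · exact φ.toMultilinearMap.map_update_zero e k
  have hwn : ‖w‖ ≠ 0 := norm_ne_zero_iff.mpr hw0
  have hun : ‖(‖w‖⁻¹ • w : V)‖ = 1 := by
    rw [norm_smul, norm_inv, norm_norm, inv_mul_cancel₀ hwn]
  have huo : ∀ j, ⟪e j, (‖w‖⁻¹ • w : V)⟫ = 0 := by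
    intro j; rw [real_inner_smul_right, hw j, mul_zero]
  have h0 := key_unit φ hcomass e he heφ k _ hun huo
  have hwu : w = ‖w‖ • (‖w‖⁻¹ • w : V) := by
    rw [smul_smul, mul_inv_cancel₀ hwn, one_smul]
  calc φ (Function.update e k w)
      = φ (Function.update e k (‖w‖ • (‖w‖⁻¹ • w : V))) := by rw [← hwu]
    _ = ‖w‖ • φ (Function.update e k (‖w‖⁻¹ • w : V)) := φ.map_update_smul _ _ _ _
    _ = 0 := by rw [h0, smul_zero]

/-- Theorem 2.3: if `φ` has comass one and `ξ = (e₁,…,e_p)` is a `φ`-plane, then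
`λ_φ(A)(ξ) = tr_ξ A = Σ_j ⟨e_j, A e_j⟩` for every endomorphism `A`. -/
theorem lambdaForm_eq_traceAlong_of_phiPlane {p : ℕ} (hp : 1 ≤ p)
    (φ : V [⋀^Fin p]→ₗ[ℝ] ℝ)
    (hcomass : ∀ e : Fin p → V, Orthonormal ℝ e → φ e ≤ 1)
    (A : V →ₗ[ℝ] V) (e : Fin p → V)
    (he : Orthonormal ℝ e) (heφ : φ e = 1) :
    lambdaForm φ A e = ∑ j, ⟪e j, A (e j)⟫ := by
  have hee : ∀ i j, ⟪e i, e j⟫ = if i = j then 1 else 0 := orthonormal_iff_ite.mp he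
  unfold lambdaForm
  refine Finset.sum_congr rfl fun k _ => ?_
  have hw : ∀ j, ⟪e j, A (e k) - ∑ i, ⟪e i, A (e k)⟫ • e i⟫ = 0 := by
    intro j
    rw [inner_sub_right, inner_sum]
    simp only [real_inner_smul_right, hee]
    rw [Finset.sum_eq_single j (fun b _ hb => by rw [if_neg (fun h => hb h.symm), mul_zero])
      (fun h => absurd (Finset.mem_univ j) h)]
    simp
  have hA : A (e k) = (∑ j, ⟪e j, A (e k)⟫ • e j)
      + (A (e k) - ∑ i, ⟪e i, A (e k)⟫ • e i) := by abel
  conv_lhs => rw [hA]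
  rw [φ.map_update_add, key_vanish φ hcomass e he heφ k _ hw, add_zero,
    φ.map_update_sum]
  simp only [φ.map_update_smul, smul_eq_mul]
  rw [Finset.sum_eq_single k ?_ (fun h => absurd (Finset.mem_univ k) h)]
  · rw [Function.update_eq_self, heφ, mul_one]
  · intro j _ hjk
    have : φ (Function.update e k (e j)) = 0 := by
      apply φ.map_eq_zero_of_eq _ (i := k) (j := j)
      · rw [Function.update_self, Function.update_of_ne hjk]
      · exact fun h => hjk h.symm
    rw [this, mul_zero]
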